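/- Let α, x, y, z ∈ ℂ with x + y + z = α, and let ℓ, n, r be natural numbers. Then (−1)^n Σ_{k=0}^{n+r} C(n+r,k) C(ℓ+k+r,r) x^{n+r−k} B_{ℓ+k}^{(α)}(y) = (−1)^{ℓ+r} Σ_{k=0}^{ℓ+r} C(ℓ+r,k) C(n+k+r,r) x^{ℓ+r−k} B_{n+k}^{(α)}(z). -/

import Mathlib

open scoped BigOperators
open Polynomial Finset

noncomputable section

/-- The formal power series `(e^t - 1)/t` over `ℂ` (constant term `1`). -/
def expSub1DivT : PowerSeries ℂ := PowerSeries.mk fun n => ((n + 1).factorial : ℂ)⁻¹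

/-- The formal power series `t/(e^t - 1)` over `ℂ`. -/
def bernoulliBase : PowerSeries ℂ := expSub1DivT⁻¹

/-- The formal logarithm of a power series with constant term `1`:
`log F = ∑_{k ≥ 1} (-1)^(k+1) (F-1)^k / k`, computed coefficientwise
(only the terms with `k ≤ n` contribute to the `n`-th coefficient). -/
def formalLog (F : PowerSeries ℂ) : PowerSeries ℂ :=
  PowerSeries.mk fun n =>
    ∑ k ∈ Finset.range (n + 1),
      (-1 : ℂ) ^ (k + 1) * (k : ℂ)⁻¹ * PowerSeries.coeff n ((F - 1) ^ k)

/-- The formal exponential of a power series with zero constant term: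
`exp H = ∑_{k ≥ 0} H^k / k!`, computed coefficientwise. -/
def formalExp (H : PowerSeries ℂ) : PowerSeries ℂ :=
  PowerSeries.mk fun n =>
    ∑ k ∈ Finset.range (n + 1), ((k.factorial : ℂ))⁻¹ * PowerSeries.coeff n (H ^ k)

/-- `(t/(e^t - 1))^α := exp (α • log (t/(e^t - 1)))`. -/
def bernoulliBasePow (α : ℂ) : PowerSeries ℂ := formalExp (α • formalLog bernoulliBase)

/-- The generalized Bernoulli numbers `B_n^{(α)}`, defined by
`∑ B_n^{(α)} t^n / n! = (t/(e^t-1))^α`. -/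
def genBernoulliNumber (α : ℂ) (n : ℕ) : ℂ :=
  (n.factorial : ℂ) * PowerSeries.coeff n (bernoulliBasePow α)

/-- The generalized Bernoulli polynomials `B_n^{(α)}(x)`, defined by
`∑ B_n^{(α)}(x) t^n / n! = (t/(e^t-1))^α e^{t x}`; equivalently
`B_n^{(α)}(x) = ∑_{k ≤ n} C(n,k) B_k^{(α)} x^{n-k}`. -/
def genBernoulliPoly (α : ℂ) (n : ℕ) : Polynomial ℂ :=
  ∑ k ∈ Finset.range (n + 1),
    Polynomial.C ((n.choose k : ℂ) * genBernoulliNumber α k) * Polynomial.X ^ (n - k)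

/-- `Ω_γ`: the unique `ℂ`-linear endomorphism of `ℂ[X]` with `Ω_γ (X^n) = B_n^{(γ)}(X)`. -/
def OmegaOp (γ : ℂ) (P : Polynomial ℂ) : Polynomial ℂ :=
  P.sum fun n a => Polynomial.C a * genBernoulliPoly γ n

end

/-!
Write `E(t) = (t/(e^t-1))^α`, so that `E(t) e^{st}` is the exponential generating function of
`B_n^{(α)}(s)`. Since `t/(e^t-1)` at `-t` is `e^t` times itself, taking `α`-th powers through
`exp ∘ (α • log)` gives `E(-t) = e^{αt} E(t)`; together with `e^{st} e^{ut} = e^{(s+u)t}` this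
yields the translation formula `B_n(s+u) = ∑ C(n,j) B_j(s) u^{n-j}` and the reflection
`B_n(α-s) = (-1)^n B_n(s)`.

Let `L_s` be the linear functional `X^n ↦ B_n^{(α)}(s)` on `ℂ[X]`, and `D_r` the `r`-th Hasse
derivative. The left side of the identity is `(-1)^n L_y(D_r(X^{ℓ+r}(X+x)^{n+r}))` and the right
side is `(-1)^{ℓ+r} L_z(D_r(X^{n+r}(X+x)^{ℓ+r}))`. As `z = α - x - y`, translation and reflection
give `L_z(p) = L_y(p(-X-x))`, and the substitution `X ↦ -X-x` exchanges the two polynomials up to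
sign, while it commutes with `D_r` up to the sign `(-1)^r`.
-/

open scoped Nat

namespace PowerSeries

section CommRing

variable {R : Type*} [CommRing R]

theorem mk_sum_coeff_mul_coeff_pow_eq_subst (f : R⟦X⟧) {u : R⟦X⟧} (hu : constantCoeff u = 0) :
    mk (fun n => ∑ k ∈ range (n + 1), coeff k f * coeff n (u ^ k)) = f.subst u := by
  ext n
  rw [coeff_mk, coeff_subst' (HasSubst.of_constantCoeff_zero' hu)]
  refine (finsum_eq_sum_of_support_subset _ fun k hk => ?_).symm
  by_contra hkn
  refine hk ?_
  rw [Finset.coe_range, Set.mem_Iio, not_lt] at hkn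
  exact mul_eq_zero_of_right _ (coeff_of_lt_order n <|
    (Nat.cast_lt.mpr (Nat.lt_of_succ_le hkn)).trans_le (le_order_pow_of_constantCoeff_eq_zero k hu))

theorem constantCoeff_subst_of_constantCoeff_eq_zero (f : R⟦X⟧) {u : R⟦X⟧}
    (hu : constantCoeff u = 0) : constantCoeff (f.subst u) = constantCoeff f := by
  rw [← mk_sum_coeff_mul_coeff_pow_eq_subst f hu, ← coeff_zero_eq_constantCoeff_apply, coeff_mk]
  simp

theorem rescale_smul (a c : R) (f : R⟦X⟧) : rescale a (c • f) = c • rescale a f := by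
  ext n
  simp only [coeff_rescale, coeff_smul, smul_eq_mul]
  ring

theorem rescale_subst (a : R) (f : R⟦X⟧) {u : R⟦X⟧} (hu : constantCoeff u = 0) :
    rescale a (f.subst u) = f.subst (rescale a u) := by
  rw [rescale_eq_subst, rescale_eq_subst,
    subst_comp_subst_apply (HasSubst.of_constantCoeff_zero' hu) (HasSubst.smul_X' a)]

end CommRing

section Algebra

variable {A : Type*} [CommRing A] [Algebra ℚ A]

theorem derivative_exp_subst {G : A⟦X⟧} (hG : constantCoeff G = 0) :
    d⁄dX A ((exp A).subst G) = (exp A).subst G * d⁄dX A G := by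
  rw [derivative_subst (HasSubst.of_constantCoeff_zero' hG), derivative_exp]

theorem derivative_log_mul_one_add_X : d⁄dX A (log A) * (1 + X) = 1 := by
  ext n
  rw [deriv_log, mul_add, mul_one, map_add]
  cases n with
  | zero => simp
  | succ n => simp [pow_succ]

theorem derivative_logOf_mul {F : A⟦X⟧} (hF : constantCoeff F = 1) :
    d⁄dX A (logOf F) * F = d⁄dX A F := by
  have hu : HasSubst (F - 1) :=
    HasSubst.of_constantCoeff_zero' (by rw [map_sub, hF, map_one, sub_self])
  have key := congrArg (substAlgHom hu) (derivative_log_mul_one_add_X (A := A))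
  rw [map_mul, map_add, map_one, coe_substAlgHom, subst_X hu, add_sub_cancel] at key
  rw [logOf_eq, derivative_subst hu, map_sub, Derivation.map_one_eq_zero, sub_zero, mul_right_comm,
    key, one_mul]

theorem rescale_logOf (a : A) {F : A⟦X⟧} (hF : constantCoeff F = 1) :
    rescale a (logOf F) = logOf (rescale a F) := by
  rw [logOf_eq, logOf_eq, rescale_subst a _ (by rw [map_sub, hF, map_one, sub_self]), map_sub,
    map_one]

end Algebra

section Field

variable {K : Type*} [Field K] [CharZero K]

theorem eq_of_derivative_eq_mul {Y Z W : K⟦X⟧} (hY : d⁄dX K Y = Y * W) (hZ : d⁄dX K Z = Z * W)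
    (hY₀ : constantCoeff Y ≠ 0) (hc : constantCoeff Y = constantCoeff Z) : Y = Z := by
  have hinv : Y⁻¹ * Y = 1 := PowerSeries.inv_mul_cancel Y hY₀
  have hquot : Z * Y⁻¹ = 1 := by
    refine derivative.ext ?_ ?_
    · rw [Derivation.leibniz, derivative_inv', hY, hZ, Derivation.map_one_eq_zero, smul_eq_mul,
        smul_eq_mul]
      linear_combination (-Z * Y⁻¹ * W) * hinv
    · rw [map_mul, constantCoeff_inv, ← hc, mul_inv_cancel₀ hY₀, map_one]
  calc Y = Z * Y⁻¹ * Y := by rw [hquot, one_mul]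
    _ = Z := by rw [mul_assoc, hinv, mul_one]

theorem exp_subst_add {G H : K⟦X⟧} (hG : constantCoeff G = 0) (hH : constantCoeff H = 0) :
    (exp K).subst (G + H) = (exp K).subst G * (exp K).subst H := by
  have hGH : constantCoeff (G + H) = 0 := by rw [map_add, hG, hH, add_zero]
  refine eq_of_derivative_eq_mul (W := d⁄dX K (G + H)) (derivative_exp_subst hGH) ?_ ?_ ?_
  · rw [Derivation.leibniz, derivative_exp_subst hG, derivative_exp_subst hH, map_add,
      smul_eq_mul, smul_eq_mul]
    ring
  · rw [constantCoeff_subst_of_constantCoeff_eq_zero _ hGH, constantCoeff_exp]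
    exact one_ne_zero
  · simp only [map_mul, constantCoeff_subst_of_constantCoeff_eq_zero _ hG,
      constantCoeff_subst_of_constantCoeff_eq_zero _ hH,
      constantCoeff_subst_of_constantCoeff_eq_zero _ hGH, constantCoeff_exp, mul_one]

theorem logOf_exp_mul {F : K⟦X⟧} (hF : constantCoeff F = 1) :
    logOf (exp K * F) = X + logOf F := by
  have hEF : constantCoeff (exp K * F) = 1 := by rw [map_mul, constantCoeff_exp, hF, one_mul]
  have hEF₀ : exp K * F ≠ 0 := fun h => by simp [h] at hEF
  refine derivative.ext (mul_right_cancel₀ hEF₀ ?_) ?_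
  · rw [derivative_logOf_mul hEF, Derivation.leibniz, derivative_exp, map_add, derivative_X,
      ← derivative_logOf_mul hF, smul_eq_mul, smul_eq_mul]
    ring
  · rw [constantCoeff_logOf hEF, map_add, constantCoeff_X, constantCoeff_logOf hF, add_zero]

theorem factorial_mul_coeff_mul_rescale_exp (G : K⟦X⟧) (t : K) (m : ℕ) :
    (m ! : K) * coeff m (G * rescale t (exp K)) =
      ∑ k ∈ range (m + 1), (m.choose k : K) * ((k ! : K) * coeff k G) * t ^ (m - k) := by
  rw [PowerSeries.coeff_mul, Finset.Nat.sum_antidiagonal_eq_sum_range_succ_mk, Finset.mul_sum]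
  refine Finset.sum_congr rfl fun k hk => ?_
  have hk : k ≤ m := Nat.lt_succ_iff.mp (Finset.mem_range.mp hk)
  rw [coeff_rescale, coeff_exp, ← Nat.choose_mul_factorial_mul_factorial hk]
  have : ((m - k)! : K) ≠ 0 := Nat.cast_ne_zero.mpr (Nat.factorial_ne_zero _)
  simp only [map_div₀, map_one, map_natCast, Nat.cast_mul]
  field_simp

end Field

end PowerSeries

namespace Polynomial

theorem iterate_derivative_comp_neg_X_sub_C {R : Type*} [CommRing R] (c : R) (p : R[X]) (r : ℕ) :
    derivative^[r] (p.comp (-X - C c)) = (-1 : R) ^ r • (derivative^[r] p).comp (-X - C c) := by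
  induction r with
  | zero => simp
  | succ r ih =>
    rw [Function.iterate_succ_apply', ih, derivative_smul, derivative_comp,
      Function.iterate_succ_apply']
    simp [pow_succ]

theorem hasseDeriv_comp_neg_X_sub_C {K : Type*} [Field K] [CharZero K] (c : K) (p : K[X]) (r : ℕ) :
    hasseDeriv r (p.comp (-X - C c)) = (-1 : K) ^ r • (hasseDeriv r p).comp (-X - C c) := by
  have h := iterate_derivative_comp_neg_X_sub_C c p r
  rw [← factorial_smul_hasseDeriv] at h
  simp only [LinearMap.smul_apply, smul_comp] at h
  apply nsmul_right_injective (Nat.factorial_ne_zero r)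
  change r ! • _ = r ! • _
  rw [h, smul_comm]

end Polynomial

section BernoulliSeries

open PowerSeries

theorem formalExp_eq_exp_subst {H : ℂ⟦X⟧} (hH : constantCoeff H = 0) :
    formalExp H = (exp ℂ).subst H := by
  rw [formalExp, ← mk_sum_coeff_mul_coeff_pow_eq_subst _ hH]
  simp [coeff_exp]

theorem formalLog_eq_logOf {F : ℂ⟦X⟧} (hF : constantCoeff F = 1) : formalLog F = logOf F := by
  rw [formalLog, logOf_eq,
    ← mk_sum_coeff_mul_coeff_pow_eq_subst _ (by rw [map_sub, hF, map_one, sub_self])]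
  congr! 3 with n k
  rcases k with _ | k
  · simp
  · simp [coeff_log, div_eq_mul_inv]

theorem X_mul_expSub1DivT : PowerSeries.X * expSub1DivT = exp ℂ - 1 := by
  ext n
  rcases n with _ | n
  · simp
  · simp [expSub1DivT, coeff_exp]

theorem constantCoeff_expSub1DivT : constantCoeff expSub1DivT = 1 := by
  simp [expSub1DivT, ← coeff_zero_eq_constantCoeff_apply]

theorem bernoulliBase_mul_exp_sub_one : bernoulliBase * (exp ℂ - 1) = PowerSeries.X := by
  rw [← X_mul_expSub1DivT, bernoulliBase, mul_left_comm,
    PowerSeries.inv_mul_cancel _ (by simp [constantCoeff_expSub1DivT]), mul_one]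

theorem constantCoeff_bernoulliBase : constantCoeff bernoulliBase = 1 := by
  simp [bernoulliBase, constantCoeff_expSub1DivT]

theorem rescale_neg_one_bernoulliBase :
    rescale (-1) bernoulliBase = exp ℂ * bernoulliBase := by
  have h₀ : exp ℂ - 1 ≠ 0 := fun h => by simpa using congrArg (PowerSeries.coeff 1) h
  have hneg := congrArg (rescale (-1 : ℂ)) bernoulliBase_mul_exp_sub_one
  rw [map_mul, map_sub, map_one, rescale_neg_one_X] at hneg
  have hexp : exp ℂ * rescale (-1) (exp ℂ) = 1 := exp_mul_exp_neg_eq_one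
  refine mul_right_cancel₀ h₀ ?_
  linear_combination (-exp ℂ) * hneg + rescale (-1) bernoulliBase * hexp
    - exp ℂ * bernoulliBase_mul_exp_sub_one

theorem bernoulliBasePow_eq_exp_subst (α : ℂ) :
    bernoulliBasePow α = (exp ℂ).subst (α • logOf bernoulliBase) := by
  rw [bernoulliBasePow, formalLog_eq_logOf constantCoeff_bernoulliBase, formalExp_eq_exp_subst]
  rw [constantCoeff_smul, constantCoeff_logOf constantCoeff_bernoulliBase, smul_zero]

theorem rescale_neg_one_bernoulliBasePow (α : ℂ) :
    rescale (-1) (bernoulliBasePow α) = rescale α (exp ℂ) * bernoulliBasePow α := by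
  have hL := constantCoeff_logOf constantCoeff_bernoulliBase
  have hαL : constantCoeff (α • logOf bernoulliBase) = 0 := by
    rw [constantCoeff_smul, hL, smul_zero]
  rw [bernoulliBasePow_eq_exp_subst, rescale_subst _ _ hαL, rescale_smul,
    rescale_logOf _ constantCoeff_bernoulliBase, rescale_neg_one_bernoulliBase,
    logOf_exp_mul constantCoeff_bernoulliBase, smul_add, exp_subst_add (by simp) hαL,
    rescale_eq_subst]

theorem genBernoulliPoly_eval (α s : ℂ) (m : ℕ) :
    (genBernoulliPoly α m).eval s =
      m ! * PowerSeries.coeff m (bernoulliBasePow α * rescale s (exp ℂ)) := by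
  rw [factorial_mul_coeff_mul_rescale_exp, genBernoulliPoly, eval_finsetSum]
  refine Finset.sum_congr rfl fun k _ => ?_
  simp only [eval_mul, eval_C, eval_pow, eval_X, genBernoulliNumber]

theorem genBernoulliPoly_eval_add (α s t : ℂ) (m : ℕ) :
    (genBernoulliPoly α m).eval (s + t) =
      ∑ j ∈ range (m + 1), (m.choose j : ℂ) * (genBernoulliPoly α j).eval s * t ^ (m - j) := by
  rw [genBernoulliPoly_eval, ← exp_mul_exp_eq_exp_add, ← mul_assoc,
    factorial_mul_coeff_mul_rescale_exp]
  simp only [genBernoulliPoly_eval]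

theorem genBernoulliPoly_eval_sub (α s : ℂ) (m : ℕ) :
    (genBernoulliPoly α m).eval (α - s) = (-1) ^ m * (genBernoulliPoly α m).eval s := by
  have h : rescale (-1) (bernoulliBasePow α * rescale s (exp ℂ)) =
      bernoulliBasePow α * rescale (α - s) (exp ℂ) := by
    rw [map_mul, rescale_neg_one_bernoulliBasePow, rescale_rescale,
      show α - s = α + s * -1 by ring, ← exp_mul_exp_eq_exp_add]
    ring
  rw [genBernoulliPoly_eval, genBernoulliPoly_eval, ← h, coeff_rescale]
  ring

end BernoulliSeries

/-- `p ↦ (OmegaOp α p).eval s`, as a linear map. -/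
noncomputable def bernoulliEval (α s : ℂ) : ℂ[X] →ₗ[ℂ] ℂ :=
  lsum fun n => (genBernoulliPoly α n).eval s • LinearMap.id

theorem bernoulliEval_monomial (α s c : ℂ) (n : ℕ) :
    bernoulliEval α s (monomial n c) = c * (genBernoulliPoly α n).eval s := by
  simp [bernoulliEval, mul_comm]

theorem bernoulliEval_taylor (α s t : ℂ) (p : ℂ[X]) :
    bernoulliEval α s (taylor t p) = bernoulliEval α (s + t) p := by
  suffices (bernoulliEval α s).comp (taylor t) = bernoulliEval α (s + t) from
    LinearMap.congr_fun this p
  ext n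
  simp only [LinearMap.coe_comp, Function.comp_apply, taylor_monomial, map_one, one_mul, add_pow,
    ← C_pow, ← C_eq_natCast, X_pow_mul_C, C_mul_X_pow_eq_monomial, monomial_mul_C, map_sum,
    bernoulliEval_monomial, genBernoulliPoly_eval_add]
  exact Finset.sum_congr rfl fun _ _ => by ring

theorem bernoulliEval_comp_neg_X_sub_C (α s c : ℂ) (p : ℂ[X]) :
    bernoulliEval α s (p.comp (-X - C c)) = bernoulliEval α (α - c - s) p := by
  suffices (bernoulliEval α s).comp (aeval (-X - C c)).toLinearMap =
      bernoulliEval α (α - c - s) by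
    simpa [comp_eq_aeval] using LinearMap.congr_fun this p
  ext n
  have h : (-X - C c) ^ n = (-1 : ℂ) ^ n • taylor c (X ^ n) := by
    rw [taylor_X_pow, ← neg_add', neg_pow, ← C_1, ← C_neg, ← C_pow, smul_eq_C_mul]
  simp only [LinearMap.coe_comp, Function.comp_apply, AlgHom.toLinearMap_apply, aeval_monomial,
    map_one, one_mul, h, map_smul, bernoulliEval_taylor, ← monomial_one_right_eq_X_pow,
    bernoulliEval_monomial, show α - c - s = α - (s + c) by ring, genBernoulliPoly_eval_sub,
    smul_eq_mul]

theorem bernoulliEval_hasseDeriv_X_pow_mul (α s x : ℂ) (m N r : ℕ) :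
    bernoulliEval α s (hasseDeriv r (X ^ (m + r) * (X + C x) ^ N)) =
      ∑ k ∈ range (N + 1), (N.choose k : ℂ) * ((m + k + r).choose r : ℂ) * x ^ (N - k) *
        (genBernoulliPoly α (m + k)).eval s := by
  simp only [add_pow, Finset.mul_sum, map_sum]
  refine Finset.sum_congr rfl fun k _ => ?_
  have hterm : X ^ (m + r) * (X ^ k * C x ^ (N - k) * (N.choose k : ℂ[X])) =
      monomial (m + k + r) (x ^ (N - k) * N.choose k) := by
    simp only [← C_mul_X_pow_eq_monomial, C_mul, C_pow, ← C_eq_natCast]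
    ring
  rw [hterm, hasseDeriv_monomial, bernoulliEval_monomial, Nat.add_sub_cancel]
  ring

/-- If `x + y + z = α`, then
`(-1)^n ∑_{k=0}^{n+r} C(n+r,k) C(ℓ+k+r,r) x^{n+r-k} B_{ℓ+k}^{(α)}(y)
 = (-1)^{ℓ+r} ∑_{k=0}^{ℓ+r} C(ℓ+r,k) C(n+k+r,r) x^{ℓ+r-k} B_{n+k}^{(α)}(z)`. -/
theorem symmetry_identity (α x y z : ℂ) (h : x + y + z = α) (ℓ n r : ℕ) :
    (-1 : ℂ) ^ n *
        ∑ k ∈ Finset.range (n + r + 1),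
          ((n + r).choose k : ℂ) * ((ℓ + k + r).choose r : ℂ) * x ^ (n + r - k) *
            (genBernoulliPoly α (ℓ + k)).eval y =
    (-1 : ℂ) ^ (ℓ + r) *
        ∑ k ∈ Finset.range (ℓ + r + 1),
          ((ℓ + r).choose k : ℂ) * ((n + k + r).choose r : ℂ) * x ^ (ℓ + r - k) *
            (genBernoulliPoly α (n + k)).eval z := by
  have hz : z = α - x - y := by linear_combination h
  have hcomp : (X ^ (n + r) * (X + C x) ^ (ℓ + r)).comp (-X - C x) =
      ((-1 : ℂ) ^ (n + r) * (-1) ^ (ℓ + r)) • (X ^ (ℓ + r) * (X + C x) ^ (n + r)) := by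
    rw [mul_comp, pow_comp, pow_comp, add_comp, X_comp, C_comp, sub_add_cancel, neg_sub_left,
      neg_pow, neg_pow (X : ℂ[X]), add_comm (C x), smul_eq_C_mul]
    simp only [C_mul, C_pow, C_neg, C_1]
    ring
  have hL := congrArg (bernoulliEval α y)
    (hasseDeriv_comp_neg_X_sub_C x (X ^ (n + r) * (X + C x) ^ (ℓ + r)) r)
  rw [hcomp, map_smul, map_smul, map_smul, smul_eq_mul, smul_eq_mul,
    bernoulliEval_comp_neg_X_sub_C, ← hz] at hL
  rw [← bernoulliEval_hasseDeriv_X_pow_mul α y x ℓ (n + r) r,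
    ← bernoulliEval_hasseDeriv_X_pow_mul α z x n (ℓ + r) r]
  set A := bernoulliEval α y (hasseDeriv r (X ^ (ℓ + r) * (X + C x) ^ (n + r)))
  have hℓ : ((-1 : ℂ) ^ ℓ) ^ 2 = 1 := by rw [← pow_right_comm, neg_one_sq, one_pow]
  have hr : ((-1 : ℂ) ^ r) ^ 2 = 1 := by rw [← pow_right_comm, neg_one_sq, one_pow]
  linear_combination (-1 : ℂ) ^ ℓ * hL - (-1 : ℂ) ^ n * A * hℓ
    - (-1 : ℂ) ^ n * A * ((-1 : ℂ) ^ ℓ) ^ 2 * hr
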